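/- Let ψ ∈ L²(μ) be a unit vector and ψ̂ the rank-one orthogonal projection φ ↦ ⟨φ,ψ⟩ψ. Then ‖[D, π(ψ̂)]‖ = ‖K ψ̂ − ψ̂ K‖ = sup over unit vectors φ ∈ L²(μ) of √(⟨φ, ψ⟩² − 2⟨φ, ψ⟩⟨Kφ, ψ⟩⟨Kψ, ψ⟩ + ⟨Kφ, ψ⟩²). -/
import Mathlib


open MeasureTheory ContinuousLinearMap
open scoped RealInnerProductSpace InnerProductSpace ENNReal

noncomputable section

/-- The shift space `Ω = {0,1}^ℕ`, with `false` playing the role of the symbol `0`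
and `true` of the symbol `1`. -/
abbrev Ω : Type := ℕ → Bool

/-- The shift map `σ`, `σ(x)ₙ = x_{n+1}`. -/
def shiftMap : Ω → Ω := fun x n => x (n + 1)

/-- Prepending a symbol: `consSeq a x = ax`. -/
def consSeq (a : Bool) (x : Ω) : Ω := fun n => Nat.casesOn n a (fun k => x k)

/-- The cylinder set `[w]` of sequences beginning with the finite word `w`. -/
def cylinder (w : List Bool) : Set Ω := {x | ∀ i : Fin w.length, x (i : ℕ) = w.get i}

/-- The Hilbert space `L²(μ)` (real). -/
abbrev E (μ : Measure Ω) := Lp (α := Ω) ℝ 2 μ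

/-- The Hilbert space `H = L²(μ) × L²(μ)` with the norm `√(‖φ‖² + ‖ψ‖²)`. -/
abbrev HS (μ : Measure Ω) := WithLp 2 (E μ × E μ)

variable {μ : Measure Ω}

/-- The diagonal block operator `(φ, ψ) ↦ (A₁φ, A₂ψ)` on `H`. -/
def blockDiag (A₁ A₂ : E μ →L[ℝ] E μ) : HS μ →L[ℝ] HS μ :=
  ((WithLp.prodContinuousLinearEquiv 2 ℝ (E μ) (E μ)).symm.toContinuousLinearMap).comp
    (((A₁.comp (ContinuousLinearMap.fst ℝ (E μ) (E μ))).prod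
        (A₂.comp (ContinuousLinearMap.snd ℝ (E μ) (E μ)))).comp
      (WithLp.prodContinuousLinearEquiv 2 ℝ (E μ) (E μ)).toContinuousLinearMap)

/-- The antidiagonal block operator `(φ, ψ) ↦ (A₁ψ, A₂φ)` on `H`. -/
def blockAntidiag (A₁ A₂ : E μ →L[ℝ] E μ) : HS μ →L[ℝ] HS μ :=
  ((WithLp.prodContinuousLinearEquiv 2 ℝ (E μ) (E μ)).symm.toContinuousLinearMap).comp
    (((A₁.comp (ContinuousLinearMap.snd ℝ (E μ) (E μ))).prod
        (A₂.comp (ContinuousLinearMap.fst ℝ (E μ) (E μ)))).comp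
      (WithLp.prodContinuousLinearEquiv 2 ℝ (E μ) (E μ)).toContinuousLinearMap)

/-- The diagonal representation `π(A)(φ,ψ) = (Aφ, Aψ)`. -/
def diagRep (A : E μ →L[ℝ] E μ) : HS μ →L[ℝ] HS μ := blockDiag A A

/-- The Dirac operator `D(φ,ψ) = (Kψ, Lφ)` associated with the pair `(K, L)`. -/
def dirac (K L : E μ →L[ℝ] E μ) : HS μ →L[ℝ] HS μ := blockAntidiag K L

/-- The commutator `[D, π(A)]`. -/
def commD (K L A : E μ →L[ℝ] E μ) : HS μ →L[ℝ] HS μ :=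
  (dirac K L).comp (diagRep A) - (diagRep A).comp (dirac K L)

/-- The rank-one orthogonal projection onto the span of the unit vector `ψ`:
`φ ↦ ⟪ψ, φ⟫ • ψ`. -/
def rankOneProj (ψ : E μ) : E μ →L[ℝ] E μ := (innerSL ℝ ψ).smulRight ψ

/-- The Haar-basis element `e_w = 2^{ℓ(w)/2} (χ_{[w1]} - χ_{[w0]})`, as a function on `Ω`. -/
def haarFun (w : List Bool) : Ω → ℝ := fun x =>
  (2 : ℝ) ^ ((w.length : ℝ) / 2) *
    ((cylinder (w ++ [true])).indicator 1 x - (cylinder (w ++ [false])).indicator 1 x)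

lemma continuous_shiftMap : Continuous shiftMap :=
  continuous_pi fun n => continuous_apply (n + 1)

lemma continuous_consSeq (a : Bool) : Continuous (consSeq a) := by
  apply continuous_pi
  intro n
  cases n with
  | zero => exact continuous_const
  | succ k => exact continuous_apply k

/-- The Koopman operator on continuous functions: `f ↦ f ∘ σ`. -/
def koopmanC (f : C(Ω, ℝ)) : C(Ω, ℝ) := f.comp ⟨shiftMap, continuous_shiftMap⟩

/-- The Ruelle operator on continuous functions: `(Lf)(x) = (f(0x) + f(1x))/2`. -/
def ruelleC (f : C(Ω, ℝ)) : C(Ω, ℝ) :=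
  ⟨fun x => (f (consSeq false x) + f (consSeq true x)) / 2,
    ((f.continuous.comp (continuous_consSeq false)).add
      (f.continuous.comp (continuous_consSeq true))).div_const 2⟩


lemma measurableSet_cylinder (w : List Bool) : MeasurableSet (cylinder w) := by
  have h : _root_.cylinder w = ⋂ i : Fin w.length, (fun x : Ω => x (i : ℕ)) ⁻¹' {w.get i} := by
    ext x; simp only [_root_.cylinder, Set.mem_setOf_eq, Set.mem_iInter, Set.mem_preimage,
      Set.mem_singleton_iff]
  rw [h]
  exact MeasurableSet.iInter fun i =>
    (measurable_pi_apply (i : ℕ)) (measurableSet_singleton _)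

lemma coord_eq_iUnion (n : ℕ) (b : Bool) :
    {x : Ω | x n = b} = ⋃ (l : List Bool) (_ : l.length = n), cylinder (l ++ [b]) := by
  ext x
  simp only [Set.mem_setOf_eq, Set.mem_iUnion]
  constructor
  · intro h
    refine ⟨List.ofFn (fun i : Fin n => x i), by simp, ?_⟩
    intro i
    have hlen : (List.ofFn (fun i : Fin n => x i) ++ [b]).length = n + 1 := by simp
    rcases lt_or_ge (i : ℕ) n with hi | hi
    · have : (List.ofFn (fun i : Fin n => x i) ++ [b]).get i
          = (List.ofFn (fun i : Fin n => x i)).get ⟨i, by simp [hi]⟩ := by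
        simp [List.getElem_append, hi]
      rw [this]
      simp
    · have hin : (i : ℕ) = n := le_antisymm (by omega) hi
      have : (List.ofFn (fun i : Fin n => x i) ++ [b]).get i = b := by
        simp [List.getElem_append, hin]
      rw [this, hin, h]
  · rintro ⟨l, hl, hx⟩
    have := hx ⟨n, by simp [hl]⟩
    simpa [List.getElem_append, hl] using this

lemma generateFrom_cylinders :
    MeasurableSpace.generateFrom {s : Set Ω | ∃ w : List Bool, s = cylinder w}
      = (inferInstance : MeasurableSpace Ω) := by
  refine le_antisymm
    (MeasurableSpace.generateFrom_le (by rintro s ⟨w, rfl⟩; exact measurableSet_cylinder w)) ?_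
  have hcoord : ∀ n : ℕ, Measurable[MeasurableSpace.generateFrom
      {s : Set Ω | ∃ w : List Bool, s = cylinder w}] (fun x : Ω => x n) := by
    intro n
    refine @measurable_to_countable' Bool Ω _ _
      (MeasurableSpace.generateFrom {s : Set Ω | ∃ w : List Bool, s = cylinder w}) _ ?_
    intro b
    have : (fun x : Ω => x n) ⁻¹' {b} = {x : Ω | x n = b} := by ext x; simp
    rw [this, coord_eq_iUnion]
    exact MeasurableSet.iUnion fun l => MeasurableSet.iUnion fun _ =>
      MeasurableSpace.measurableSet_generateFrom ⟨_, rfl⟩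
  exact iSup_le fun n => measurable_iff_comap_le.1 (hcoord n)

lemma isPiSystem_cylinders :
    IsPiSystem {s : Set Ω | ∃ w : List Bool, s = cylinder w} := by
  have key : ∀ w v : List Bool, w.length ≤ v.length →
      (cylinder w ∩ cylinder v).Nonempty → cylinder w ∩ cylinder v = cylinder v := by
    intro w v h ⟨x, hxw, hxv⟩
    refine Set.inter_eq_right.2 ?_
    intro y hy i
    have hi : (i : ℕ) < v.length := lt_of_lt_of_le i.isLt h
    calc y i = v.get ⟨i, hi⟩ := hy ⟨i, hi⟩
      _ = x i := (hxv ⟨i, hi⟩).symm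
      _ = w.get i := hxw i
  rintro s ⟨w, rfl⟩ t ⟨v, rfl⟩ hne
  rcases le_total w.length v.length with h | h
  · exact ⟨v, (key w v h hne).symm ▸ rfl⟩
  · rw [Set.inter_comm] at hne ⊢
    exact ⟨w, (key v w h hne).symm ▸ rfl⟩

lemma measurable_shiftMap : Measurable shiftMap :=
  measurable_pi_lambda _ fun n => measurable_pi_apply (n + 1)

lemma shift_preimage_cylinder (w : List Bool) :
    shiftMap ⁻¹' cylinder w = cylinder (false :: w) ∪ cylinder (true :: w) := by
  ext x
  simp only [Set.mem_preimage, Set.mem_union]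
  constructor
  · intro h
    have hx : ∀ b : Bool, x 0 = b → x ∈ cylinder (b :: w) := by
      intro b hb i
      refine Fin.cases ?_ (fun j => ?_) i
      · simpa using hb
      · simpa [shiftMap] using h j
    cases hb : x 0
    · exact Or.inl (hx false hb)
    · exact Or.inr (hx true hb)
  · rintro (h | h) <;> · intro i
                         have := h i.succ
                         simpa [shiftMap] using this

lemma disjoint_cyl (w : List Bool) :
    Disjoint (cylinder (false :: w)) (cylinder (true :: w)) := by
  rw [Set.disjoint_left]
  intro x h1 h2
  have e1 := h1 ⟨0, by simp⟩
  have e2 := h2 ⟨0, by simp⟩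
  simp at e1 e2
  rw [e1] at e2; exact Bool.false_ne_true e2

lemma map_shiftMap_eq (μ : Measure Ω) [IsProbabilityMeasure μ]
    (hμ : ∀ w : List Bool, μ (cylinder w) = (1 / 2) ^ w.length) :
    μ.map shiftMap = μ := by
  haveI : IsProbabilityMeasure (μ.map shiftMap) :=
    Measure.isProbabilityMeasure_map measurable_shiftMap.aemeasurable
  refine ext_of_generate_finite _ generateFrom_cylinders.symm isPiSystem_cylinders ?_ ?_
  · rintro s ⟨w, rfl⟩
    rw [Measure.map_apply measurable_shiftMap (measurableSet_cylinder w),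
      shift_preimage_cylinder,
      measure_union (disjoint_cyl w) (measurableSet_cylinder _), hμ, hμ]
    simp only [List.length_cons, hμ]
    rw [pow_succ, ← add_mul, ← two_mul, mul_comm (2 : ℝ≥0∞), mul_assoc, one_div,
      ENNReal.mul_inv_cancel two_ne_zero (by norm_num), mul_one]
  · simp [measure_univ]


lemma blockAntidiag_apply (A₁ A₂ : E μ →L[ℝ] E μ) (p : HS μ) :
    blockAntidiag A₁ A₂ p = (WithLp.equiv 2 (E μ × E μ)).symm (A₁ p.snd, A₂ p.fst) := rfl

lemma commD_eq (K L A : E μ →L[ℝ] E μ) :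
    commD K L A = blockAntidiag (K ∘L A - A ∘L K) (L ∘L A - A ∘L L) := by
  ext p
  show (dirac K L) ((diagRep A) p) - (diagRep A) ((dirac K L) p) = _
  rfl

lemma norm_blockAntidiag (A₁ A₂ : E μ →L[ℝ] E μ) :
    ‖blockAntidiag A₁ A₂‖ = max ‖A₁‖ ‖A₂‖ := by
  have hfst : ∀ p : HS μ, ((blockAntidiag A₁ A₂) p).fst = A₁ p.snd := fun p => rfl
  have hsnd : ∀ p : HS μ, ((blockAntidiag A₁ A₂) p).snd = A₂ p.fst := fun p => rfl
  refine le_antisymm ?_ (max_le ?_ ?_)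
  · refine opNorm_le_bound _ (le_max_of_le_left (norm_nonneg _)) fun p => ?_
    have h1 : ‖(blockAntidiag A₁ A₂) p‖ ^ 2 ≤ (max ‖A₁‖ ‖A₂‖) ^ 2 * ‖p‖ ^ 2 := by
      rw [WithLp.prod_norm_sq_eq_of_L2, WithLp.prod_norm_sq_eq_of_L2, hfst, hsnd]
      have e1 : ‖A₁ p.snd‖ ≤ max ‖A₁‖ ‖A₂‖ * ‖p.snd‖ :=
        le_trans (le_opNorm _ _) (by gcongr; exact le_max_left _ _)
      have e2 : ‖A₂ p.fst‖ ≤ max ‖A₁‖ ‖A₂‖ * ‖p.fst‖ :=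
        le_trans (le_opNorm _ _) (by gcongr; exact le_max_right _ _)
      calc ‖A₁ p.snd‖ ^ 2 + ‖A₂ p.fst‖ ^ 2
          ≤ (max ‖A₁‖ ‖A₂‖ * ‖p.snd‖) ^ 2 + (max ‖A₁‖ ‖A₂‖ * ‖p.fst‖) ^ 2 := by
            gcongr
        _ = (max ‖A₁‖ ‖A₂‖) ^ 2 * (‖p.fst‖ ^ 2 + ‖p.snd‖ ^ 2) := by ring
    calc ‖(blockAntidiag A₁ A₂) p‖ = Real.sqrt (‖(blockAntidiag A₁ A₂) p‖ ^ 2) :=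
          (Real.sqrt_sq (norm_nonneg _)).symm
      _ ≤ Real.sqrt ((max ‖A₁‖ ‖A₂‖ * ‖p‖) ^ 2) := Real.sqrt_le_sqrt (by nlinarith [h1])
      _ = max ‖A₁‖ ‖A₂‖ * ‖p‖ := Real.sqrt_sq (by positivity)
  · refine opNorm_le_bound _ (norm_nonneg _) fun y => ?_
    set p : HS μ := (WithLp.equiv 2 (E μ × E μ)).symm (0, y) with hp
    have h0 : ‖(blockAntidiag A₁ A₂) p‖ = ‖A₁ y‖ := by
      rw [WithLp.prod_norm_eq_of_L2]
      show Real.sqrt (‖A₁ y‖ ^ 2 + ‖A₂ (0 : E μ)‖ ^ 2) = _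
      rw [map_zero]
      simp [Real.sqrt_sq (norm_nonneg _)]
    have hpn : ‖p‖ = ‖y‖ := by
      rw [WithLp.prod_norm_eq_of_L2]
      show Real.sqrt (‖(0 : E μ)‖ ^ 2 + ‖y‖ ^ 2) = _
      simp [Real.sqrt_sq (norm_nonneg _)]
    calc ‖A₁ y‖ = ‖(blockAntidiag A₁ A₂) p‖ := h0.symm
      _ ≤ ‖blockAntidiag A₁ A₂‖ * ‖p‖ := le_opNorm _ _
      _ = ‖blockAntidiag A₁ A₂‖ * ‖y‖ := by rw [hpn]
  · refine opNorm_le_bound _ (norm_nonneg _) fun y => ?_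
    set p : HS μ := (WithLp.equiv 2 (E μ × E μ)).symm (y, 0) with hp
    have h0 : ‖(blockAntidiag A₁ A₂) p‖ = ‖A₂ y‖ := by
      rw [WithLp.prod_norm_eq_of_L2]
      show Real.sqrt (‖A₁ (0 : E μ)‖ ^ 2 + ‖A₂ y‖ ^ 2) = _
      rw [map_zero]
      simp [Real.sqrt_sq (norm_nonneg _)]
    have hpn : ‖p‖ = ‖y‖ := by
      rw [WithLp.prod_norm_eq_of_L2]
      show Real.sqrt (‖y‖ ^ 2 + ‖(0 : E μ)‖ ^ 2) = _
      simp [Real.sqrt_sq (norm_nonneg _)]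
    calc ‖A₂ y‖ = ‖(blockAntidiag A₁ A₂) p‖ := h0.symm
      _ ≤ ‖blockAntidiag A₁ A₂‖ * ‖p‖ := le_opNorm _ _
      _ = ‖blockAntidiag A₁ A₂‖ * ‖y‖ := by rw [hpn]

lemma adjoint_rankOneProj (ψ : E μ) :
    ContinuousLinearMap.adjoint (rankOneProj ψ) = rankOneProj ψ := by
  symm
  rw [ContinuousLinearMap.eq_adjoint_iff]
  intro x y
  show ⟪⟪ψ, x⟫_ℝ • ψ, y⟫_ℝ = ⟪x, ⟪ψ, y⟫_ℝ • ψ⟫_ℝ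
  rw [real_inner_smul_left, real_inner_smul_right, real_inner_comm x ψ]
  ring

lemma norm_ruelle_comm (K L A : E μ →L[ℝ] E μ) (hadj : ContinuousLinearMap.adjoint K = L)
    (hA : ContinuousLinearMap.adjoint A = A) :
    ‖L ∘L A - A ∘L L‖ = ‖K ∘L A - A ∘L K‖ := by
  have h : L ∘L A - A ∘L L = - ContinuousLinearMap.adjoint (K ∘L A - A ∘L K) := by
    rw [map_sub, ContinuousLinearMap.adjoint_comp, ContinuousLinearMap.adjoint_comp, hadj, hA]
    rw [neg_sub]
  rw [h, norm_neg]
  exact LinearIsometryEquiv.norm_map ContinuousLinearMap.adjoint _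

lemma opNorm_eq_sSup (T : E μ →L[ℝ] E μ) (ψ : E μ) (hψ : ‖ψ‖ = 1) :
    ‖T‖ = sSup {r : ℝ | ∃ φ : E μ, ‖φ‖ = 1 ∧ r = ‖T φ‖} := by
  set S := {r : ℝ | ∃ φ : E μ, ‖φ‖ = 1 ∧ r = ‖T φ‖} with hS
  have hne : S.Nonempty := ⟨‖T ψ‖, ψ, hψ, rfl⟩
  have hbdd : BddAbove S := by
    refine ⟨‖T‖, ?_⟩
    rintro r ⟨φ, hφ, rfl⟩
    exact T.unit_le_opNorm φ hφ.le
  refine le_antisymm ?_ (csSup_le hne (by rintro r ⟨φ, hφ, rfl⟩; exact T.unit_le_opNorm φ hφ.le))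
  refine opNorm_le_bound _ ?_ fun x => ?_
  · exact le_trans (norm_nonneg (T ψ)) (le_csSup hbdd ⟨ψ, hψ, rfl⟩)
  · by_cases hx : x = 0
    · simp only [hx, map_zero, norm_zero, norm_zero, mul_zero]; exact le_refl 0
    · have hnx : ‖x‖ ≠ 0 := norm_ne_zero_iff.2 hx
      have hu : ‖‖x‖⁻¹ • x‖ = 1 := by
        rw [norm_smul, norm_inv, norm_norm, inv_mul_cancel₀ hnx]
      have h2 : ‖T (‖x‖⁻¹ • x)‖ ≤ sSup S := le_csSup hbdd ⟨_, hu, rfl⟩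
      have h3 : ‖T (‖x‖⁻¹ • x)‖ = ‖x‖⁻¹ * ‖T x‖ := by
        rw [_root_.map_smul, norm_smul, norm_inv, norm_norm]
      calc ‖T x‖ = ‖x‖ * (‖x‖⁻¹ * ‖T x‖) := by field_simp
        _ ≤ ‖x‖ * sSup S := mul_le_mul_of_nonneg_left (h3 ▸ h2) (norm_nonneg x)
        _ = sSup S * ‖x‖ := mul_comm _ _

lemma norm_K_apply (K : E μ →L[ℝ] E μ)
    (hK : ∀ g : E μ, (K g : Ω → ℝ) =ᵐ[μ] fun x => g (shiftMap x))
    (hmap : μ.map shiftMap = μ) (g : E μ) : ‖K g‖ = ‖g‖ := by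
  have h1 : ⟪K g, K g⟫_ℝ = ⟪g, g⟫_ℝ := by
    rw [MeasureTheory.L2.inner_def, MeasureTheory.L2.inner_def]
    have hae : (fun x => ⟪(K g : Ω → ℝ) x, (K g : Ω → ℝ) x⟫_ℝ) =ᵐ[μ]
        fun x => ⟪(g : Ω → ℝ) (shiftMap x), (g : Ω → ℝ) (shiftMap x)⟫_ℝ := by
      filter_upwards [hK g] with x hx
      rw [hx]
    rw [integral_congr_ae hae]
    have hm : AEStronglyMeasurable (fun y => ⟪(g : Ω → ℝ) y, (g : Ω → ℝ) y⟫_ℝ)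
        (μ.map shiftMap) := by
      rw [hmap]
      exact (Lp.aestronglyMeasurable g).inner (Lp.aestronglyMeasurable g)
    rw [← integral_map measurable_shiftMap.aemeasurable hm, hmap]
  have h2 : ‖K g‖ ^ 2 = ‖g‖ ^ 2 := by
    rw [← real_inner_self_eq_norm_sq, ← real_inner_self_eq_norm_sq, h1]
  nlinarith [norm_nonneg (K g), norm_nonneg g]

lemma norm_B_apply (K : E μ →L[ℝ] E μ) (ψ φ : E μ) (hψ : ‖ψ‖ = 1) (hKψ : ‖K ψ‖ = 1) :
    Real.sqrt (⟪φ, ψ⟫_ℝ ^ 2 - 2 * ⟪φ, ψ⟫_ℝ * ⟪K φ, ψ⟫_ℝ * ⟪K ψ, ψ⟫_ℝ + ⟪K φ, ψ⟫_ℝ ^ 2)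
      = ‖(K ∘L rankOneProj ψ - rankOneProj ψ ∘L K) φ‖ := by
  have happ : (K ∘L rankOneProj ψ - rankOneProj ψ ∘L K) φ
      = ⟪ψ, φ⟫_ℝ • K ψ - ⟪ψ, K φ⟫_ℝ • ψ := by
    show K ((rankOneProj ψ) φ) - (rankOneProj ψ) (K φ) = _
    show K (⟪ψ, φ⟫_ℝ • ψ) - ⟪ψ, K φ⟫_ℝ • ψ = _
    rw [_root_.map_smul]
  have hsq : ‖(K ∘L rankOneProj ψ - rankOneProj ψ ∘L K) φ‖ ^ 2
      = ⟪φ, ψ⟫_ℝ ^ 2 - 2 * ⟪φ, ψ⟫_ℝ * ⟪K φ, ψ⟫_ℝ * ⟪K ψ, ψ⟫_ℝ + ⟪K φ, ψ⟫_ℝ ^ 2 := by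
    rw [happ, norm_sub_sq_real, norm_smul, norm_smul, real_inner_smul_left,
      real_inner_smul_right, mul_pow, mul_pow]
    simp only [Real.norm_eq_abs, sq_abs]
    rw [hKψ, hψ, real_inner_comm ψ φ, real_inner_comm ψ (K φ)]
    ring
  rw [← hsq, Real.sqrt_sq (norm_nonneg _)]

end

/-- For a unit vector `ψ` and its rank-one projection `ψ̂`:
`‖[D, π(ψ̂)]‖ = ‖K ψ̂ − ψ̂ K‖ = sup over unit φ of √(⟨φ,ψ⟩² − 2⟨φ,ψ⟩⟨Kφ,ψ⟩⟨Kψ,ψ⟩ + ⟨Kφ,ψ⟩²)`. -/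
theorem stmt8
    (μ : Measure Ω) [IsProbabilityMeasure μ]
    (hμ : ∀ w : List Bool, μ (cylinder w) = (1 / 2) ^ w.length)
    (K L : E μ →L[ℝ] E μ)
    (hK : ∀ g : E μ, (K g : Ω → ℝ) =ᵐ[μ] fun x => g (shiftMap x))
    (hL : ∀ g : E μ, (L g : Ω → ℝ) =ᵐ[μ]
      fun x => (g (consSeq false x) + g (consSeq true x)) / 2)
    (hadj : ContinuousLinearMap.adjoint K = L)
    (ψ : E μ) (hψ : ‖ψ‖ = 1) :
    ‖commD K L (rankOneProj ψ)‖ = ‖K ∘L rankOneProj ψ - rankOneProj ψ ∘L K‖ ∧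
    ‖K ∘L rankOneProj ψ - rankOneProj ψ ∘L K‖ =
      sSup {r : ℝ | ∃ φ : E μ, ‖φ‖ = 1 ∧
        r = Real.sqrt (⟪φ, ψ⟫_ℝ ^ 2 - 2 * ⟪φ, ψ⟫_ℝ * ⟪K φ, ψ⟫_ℝ * ⟪K ψ, ψ⟫_ℝ
              + ⟪K φ, ψ⟫_ℝ ^ 2)} := by
  have hmap : μ.map shiftMap = μ := map_shiftMap_eq μ hμ
  have hA := adjoint_rankOneProj (μ := μ) ψ
  have hKψ : ‖K ψ‖ = 1 := by rw [norm_K_apply K hK hmap, hψ]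
  refine ⟨?_, ?_⟩
  · rw [commD_eq, norm_blockAntidiag, norm_ruelle_comm K L (rankOneProj ψ) hadj hA, max_self]
  · have hset : {r : ℝ | ∃ φ : E μ, ‖φ‖ = 1 ∧
        r = Real.sqrt (⟪φ, ψ⟫_ℝ ^ 2 - 2 * ⟪φ, ψ⟫_ℝ * ⟪K φ, ψ⟫_ℝ * ⟪K ψ, ψ⟫_ℝ
              + ⟪K φ, ψ⟫_ℝ ^ 2)} =
        {r : ℝ | ∃ φ : E μ, ‖φ‖ = 1 ∧
          r = ‖(K ∘L rankOneProj ψ - rankOneProj ψ ∘L K) φ‖} := by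
      ext r
      constructor
      · rintro ⟨φ, hφ, rfl⟩
        exact ⟨φ, hφ, norm_B_apply K ψ φ hψ hKψ⟩
      · rintro ⟨φ, hφ, rfl⟩
        exact ⟨φ, hφ, (norm_B_apply K ψ φ hψ hKψ).symm⟩
    rw [hset]
    exact opNorm_eq_sSup _ ψ hψ
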